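/- arXiv:2504.08162 — 3 statements merged into one kernel-verified Lean document; each statement's English description precedes it below -/
import Mathlib

section
/- Let s₁, s₂ : [0,T] → ℝ be differentiable functions solving the slow-down system, i.e. s₁'(t) = L·s₁(t)·(s₁(t)² + s₂(t)²)^α and s₂'(t) = −L·s₂(t)·(s₁(t)² + s₂(t)²)^α for all t ∈ [0,T], with s₁(t) > 0 and s₂(t) > 0 for all t ∈ [0,T]. Then for all 0 ≤ t ≤ b ≤ T one has s₁(t) ≤ s₁(b)·(1 + C₀·s₁(b)^{2α}·(b−t))^{−1/(2α)}. -/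
/-!
Along the slow-down flow `s₁' = L s₁ (s₁² + s₂²)^α ≥ L s₁^{1+2α}`, so `s₁` grows at least as fast
as a solution of `x' = L x^{1+2α}`. For such a superlinear growth `x^{-β} + β L u` is
nonincreasing (`β = 2α`), and comparing its values at `t` and `b` and solving for `x t` gives
the bound.
-/

open Set Real

lemma rpow_two_mul_le_sq_add_sq_rpow {x α : ℝ} (hx : 0 ≤ x) (hα : 0 ≤ α) (y : ℝ) :
    x ^ (2 * α) ≤ (x ^ 2 + y ^ 2) ^ α := by
  rw [show (2 : ℝ) * α = (2 : ℕ) * α by norm_num, rpow_natCast_mul hx]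
  exact rpow_le_rpow (by positivity) (by nlinarith [sq_nonneg y]) hα

section GrowthComparison

variable {x x' : ℝ → ℝ} {K β a b : ℝ}

lemma antitoneOn_rpow_neg_add_mul_of_mul_rpow_le_deriv (hβ : 0 < β)
    (hderiv : ∀ u ∈ Icc a b, HasDerivAt x (x' u) u) (hpos : ∀ u ∈ Icc a b, 0 < x u)
    (hgrowth : ∀ u ∈ Icc a b, K * x u ^ (β + 1) ≤ x' u) :
    AntitoneOn (fun u => x u ^ (-β) + β * K * u) (Icc a b) := by
  have hg : ∀ u ∈ Icc a b,
      HasDerivAt (fun u => x u ^ (-β) + β * K * u) (x' u * -β * x u ^ (-β - 1) + β * K) u :=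
    fun u hu => ((hderiv u hu).rpow_const (Or.inl (hpos u hu).ne')).add
      ((hasDerivAt_id u).const_mul (β * K) |>.congr_deriv (mul_one _))
  refine antitoneOn_of_hasDerivWithinAt_nonpos (convex_Icc a b)
    (fun u hu => (hg u hu).continuousAt.continuousWithinAt)
    (fun u hu => (hg u (interior_subset hu)).hasDerivWithinAt) fun u hu => ?_
  have hu := interior_subset hu
  have hxu := hpos u hu
  have hcancel : x u ^ (β + 1) * x u ^ (-β - 1) = 1 := by
    rw [← rpow_add hxu]; simp
  have hK : K ≤ x' u * x u ^ (-β - 1) := by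
    calc K = K * x u ^ (β + 1) * x u ^ (-β - 1) := by rw [mul_assoc, hcancel, mul_one]
      _ ≤ x' u * x u ^ (-β - 1) :=
        mul_le_mul_of_nonneg_right (hgrowth u hu) (rpow_nonneg hxu.le _)
  nlinarith

lemma le_mul_one_add_rpow_neg_inv_of_rpow_neg_add_le {y z c : ℝ} (hβ : 0 < β) (hy : 0 < y)
    (hz : 0 < z) (hc : 0 ≤ c) (h : z ^ (-β) + c ≤ y ^ (-β)) :
    y ≤ z * (1 + c * z ^ β) ^ (-(1 / β)) := by
  have hcancel : z ^ (-β) * z ^ β = 1 := by rw [← rpow_add hz]; simp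
  have hfactor : z ^ (-β) + c = z ^ (-β) * (1 + c * z ^ β) := by
    linear_combination (-c) * hcancel
  have hinv : ∀ w : ℝ, 0 ≤ w → (w ^ (-β)) ^ (-(1 / β)) = w := fun w hw => by
    rw [← rpow_mul hw, show -β * -(1 / β) = 1 by field_simp, rpow_one]
  have hpos : 0 < z ^ (-β) + c := by positivity
  calc y = (y ^ (-β)) ^ (-(1 / β)) := (hinv y hy.le).symm
    _ ≤ (z ^ (-β) + c) ^ (-(1 / β)) :=
      rpow_le_rpow_of_nonpos hpos h (by simp only [neg_nonpos]; positivity)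
    _ = z * (1 + c * z ^ β) ^ (-(1 / β)) := by
      rw [hfactor, mul_rpow (by positivity) (by positivity), hinv z hz.le]

theorem le_of_mul_rpow_le_deriv (hβ : 0 < β) (hK : 0 ≤ K) (hab : a ≤ b)
    (hderiv : ∀ u ∈ Icc a b, HasDerivAt x (x' u) u) (hpos : ∀ u ∈ Icc a b, 0 < x u)
    (hgrowth : ∀ u ∈ Icc a b, K * x u ^ (β + 1) ≤ x' u) :
    x a ≤ x b * (1 + β * K * x b ^ β * (b - a)) ^ (-(1 / β)) := by
  have ha : a ∈ Icc a b := left_mem_Icc.2 hab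
  have hb : b ∈ Icc a b := right_mem_Icc.2 hab
  have hmono := antitoneOn_rpow_neg_add_mul_of_mul_rpow_le_deriv hβ hderiv hpos hgrowth ha hb hab
  have hcomm : β * K * x b ^ β * (b - a) = β * K * (b - a) * x b ^ β := by ring
  rw [hcomm]
  refine le_mul_one_add_rpow_neg_inv_of_rpow_neg_add_le hβ (hpos a ha) (hpos b hb)
    (by have := sub_nonneg.2 hab; positivity) ?_
  dsimp only at hmono
  linarith

end GrowthComparison

theorem slowdown_s1_upper_bound_general
    (lam α : ℝ) (hlam : 1 < lam) (hα : α ∈ Set.Ioo (0 : ℝ) 1)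
    (p : ℤ) (hp : 3 ≤ p)
    (L C₀ : ℝ)
    (hL : L = Real.log lam * ((p : ℝ) / 2) ^ (2 * α))
    (hC₀ : C₀ = 2 * α * L)
    (T : ℝ) (s₁ s₂ : ℝ → ℝ)
    (hs₁ : ∀ t ∈ Set.Icc (0 : ℝ) T,
      HasDerivAt s₁ (L * s₁ t * (s₁ t ^ 2 + s₂ t ^ 2) ^ α) t)
    (hpos₁ : ∀ t ∈ Set.Icc (0 : ℝ) T, 0 < s₁ t)
    (t b : ℝ) (ht : 0 ≤ t) (htb : t ≤ b) (hbT : b ≤ T) :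
    s₁ t ≤ s₁ b * (1 + C₀ * s₁ b ^ (2 * α) * (b - t)) ^ (-(1 / (2 * α))) := by
  have hα0 : 0 < α := hα.1
  have hL0 : 0 ≤ L := by
    have : (0 : ℝ) < p := by exact_mod_cast (by omega : (0 : ℤ) < p)
    rw [hL]; exact mul_nonneg (log_nonneg hlam.le) (by positivity)
  have hsub : Icc t b ⊆ Icc 0 T := Icc_subset_Icc ht hbT
  rw [hC₀]
  refine le_of_mul_rpow_le_deriv (by positivity) hL0 htb (fun u hu => hs₁ u (hsub hu))
    (fun u hu => hpos₁ u (hsub hu)) fun u hu => ?_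
  have hs := hpos₁ u (hsub hu)
  calc L * s₁ u ^ (2 * α + 1) = L * s₁ u * s₁ u ^ (2 * α) := by
        rw [rpow_add_one hs.ne']; ring
    _ ≤ L * s₁ u * (s₁ u ^ 2 + s₂ u ^ 2) ^ α :=
        mul_le_mul_of_nonneg_left (rpow_two_mul_le_sq_add_sq_rpow hs.le hα0.le _) (by positivity)

/-- Lemma "s1 and s2 approx" (d): upper bound on `s₁` along a solution of the
slow-down system `s₁' = L s₁ (s₁² + s₂²)^α`, `s₂' = -L s₂ (s₁² + s₂²)^α`,
where `L = (log λ) (p/2)^{2α}` and `C₀ = 2 α L`. -/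
theorem slowdown_s1_upper_bound
    (lam α : ℝ) (hlam : 1 < lam) (hα : α ∈ Set.Ioo (0 : ℝ) 1)
    (p : ℤ) (hp : 3 ≤ p)
    (L C₀ : ℝ)
    (hL : L = Real.log lam * ((p : ℝ) / 2) ^ (2 * α))
    (hC₀ : C₀ = 2 * α * L)
    (T : ℝ) (s₁ s₂ : ℝ → ℝ)
    (hs₁ : ∀ t ∈ Set.Icc (0 : ℝ) T,
      HasDerivAt s₁ (L * s₁ t * (s₁ t ^ 2 + s₂ t ^ 2) ^ α) t)
    (hs₂ : ∀ t ∈ Set.Icc (0 : ℝ) T,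
      HasDerivAt s₂ (-(L * s₂ t * (s₁ t ^ 2 + s₂ t ^ 2) ^ α)) t)
    (hpos₁ : ∀ t ∈ Set.Icc (0 : ℝ) T, 0 < s₁ t)
    (hpos₂ : ∀ t ∈ Set.Icc (0 : ℝ) T, 0 < s₂ t)
    (t b : ℝ) (ht : 0 ≤ t) (htb : t ≤ b) (hbT : b ≤ T) :
    s₁ t ≤ s₁ b * (1 + C₀ * s₁ b ^ (2 * α) * (b - t)) ^ (-(1 / (2 * α))) :=
  slowdown_s1_upper_bound_general lam α hlam hα p hp L C₀ hL hC₀ T s₁ s₂ hs₁ hpos₁ t b ht htb hbT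
end

section
/- Under the standing comparison assumptions for two solutions of the slow-down system on [0,T] with T₁ = T/2, setting β = (1−μ)/2^{α+2}, one has for all T₁ ≤ t ≤ b ≤ T: Δs₂(t) ≤ (Δs₂(T₁)/s₁(T₁))·s₁(t)·((1 + 2^α·C₀·s₁(b)^{2α}·(b−t)) / (1 + 2^α·C₀·s₁(b)^{2α}·(b−T₁)))^{β}. -/
/-!
On `[0, T/2]`, where `s₁ ≤ s₂`, the perturbation can only increase `s₁² + s₂²`, so the ratio
`u₂ / s₂` decreases and the relative gap `Δs₂ / s₂` at `T/2` is still at most `(1 - μ) / 72`.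
At `T/2` the solution `s` is balanced (`s₁ = s₂`), and both products `s₁ s₂` and `u₁ u₂` are
first integrals; with the gap this small, `u₂ = 17/16 · s₂` would force `|s|² < |u|²`, hence
`(u₂ / s₂)' < 0`, so `u₂ ≤ 17/16 · s₂` persists on `[T/2, T]`. With this gap the logarithmic
derivative of `Δs₂ / s₁` is at most `-(L/2) |s|^{2α}`, while `s₁^{-2α} + 2^α C₀ t` is
nondecreasing because `s₂ ≤ s₁`. Comparing the two shows that
`(Δs₂ / s₁) · (1 + 2^α C₀ s₁(b)^{2α} (b - t))^{-β}` is nonincreasing on `[T/2, b]`.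
-/

open Set

theorem mul_rpow_sub_rpow_le {x y α : ℝ} (hx : 0 ≤ x) (hy : 0 < y) (hα₀ : 0 ≤ α) (hα₁ : α ≤ 1) :
    y * (x ^ α - y ^ α) ≤ α * y ^ α * (x - y) := by
  have hbern := rpow_one_add_le_one_add_mul_self
    (by linarith [div_nonneg hx hy.le] : -1 ≤ x / y - 1) hα₀ hα₁
  rw [add_sub_cancel, Real.div_rpow hx hy.le, div_le_iff₀ (by positivity)] at hbern
  have hy' : y * (y ^ α * (α * (x / y - 1))) = α * y ^ α * (x - y) := by field_simp
  nlinarith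

theorem sq_add_sq_le_sq_add_sq {a₁ a₂ b₁ b₂ : ℝ} (ha₁ : 0 ≤ a₁) (ha : a₁ ≤ a₂)
    (h : |b₁ - a₁| ≤ b₂ - a₂) : a₁ ^ 2 + a₂ ^ 2 ≤ b₁ ^ 2 + b₂ ^ 2 := by
  rw [abs_le] at h
  nlinarith

theorem mul_le_of_sub_le_of_sub_le {σ u₁ u₂ μ : ℝ} (hσ : 0 < σ) (hμ₀ : 0 ≤ μ) (hμ₁ : μ ≤ 1)
    (hu₂ : 0 ≤ u₂ - σ) (hu₂' : u₂ - σ ≤ (1 - μ) / 72 * σ) (hu₁ : u₁ - σ ≤ μ * (u₂ - σ)) :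
    u₁ * u₂ ≤ (1 + (1 - μ ^ 2) / 60) * (σ * σ) := by
  have h1 : u₁ * u₂ ≤ (σ + μ * (u₂ - σ)) * u₂ :=
    mul_le_mul_of_nonneg_right (by linarith) (by linarith)
  have h2 := mul_self_le_mul_self hu₂ hu₂'
  nlinarith [mul_le_mul_of_nonneg_left hu₂' (by positivity : 0 ≤ (1 + μ) * σ),
    mul_le_mul_of_nonneg_left h2 hμ₀,
    mul_nonneg (mul_nonneg hμ₀ (sub_nonneg.2 hμ₁)) (mul_self_nonneg σ)]

theorem sq_add_sq_lt_of_mul_eq {a₁ a₂ b₁ b₂ ρ μ : ℝ} (ha₁ : 0 < a₁) (ha₂ : 0 < a₂)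
    (hμ₀ : 0 ≤ μ) (hμ₁ : μ < 1) (hρ₀ : 0 ≤ ρ) (hρ : ρ ≤ 1 + (1 - μ ^ 2) / 60)
    (hb₂ : b₂ = 17 / 16 * a₂) (hprod : b₁ * b₂ = ρ * (a₁ * a₂)) (hctrl : a₁ - b₁ ≤ μ * (b₂ - a₂)) :
    a₁ ^ 2 + a₂ ^ 2 < b₁ ^ 2 + b₂ ^ 2 := by
  obtain rfl : b₁ = 16 / 17 * ρ * a₁ := by
    apply mul_right_cancel₀ ha₂.ne'; rw [hb₂] at hprod; linarith
  subst hb₂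
  have hq : 0 < 1 - 16 / 17 * ρ := by nlinarith
  have hkey : μ ^ 2 * (1 + 16 / 17 * ρ) < 33 * (1 - 16 / 17 * ρ) := by
    have hm : 0 < 1 - μ ^ 2 := by nlinarith
    nlinarith [mul_le_mul_of_nonneg_right hρ (by positivity : (0 : ℝ) ≤ 33 + μ ^ 2),
      mul_pos hm (by nlinarith : (0 : ℝ) < 33 - (528 + 16 * μ ^ 2) / 60)]
  have hsq : ((1 - 16 / 17 * ρ) * a₁) ^ 2 ≤ (μ / 16 * a₂) ^ 2 :=
    pow_le_pow_left₀ (by positivity) (by linarith) 2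
  have : (1 - 16 / 17 * ρ) * (a₁ ^ 2 * (1 - (16 / 17 * ρ) ^ 2)) <
      (1 - 16 / 17 * ρ) * (33 / 256 * a₂ ^ 2) := by
    nlinarith [mul_le_mul_of_nonneg_left hsq (by positivity : (0 : ℝ) ≤ 1 + 16 / 17 * ρ),
      mul_lt_mul_of_pos_right hkey (by positivity : (0 : ℝ) < a₂ ^ 2)]
  nlinarith [lt_of_mul_lt_mul_left this hq.le]

theorem snd_mul_rpow_sub_rpow_le {a₁ a₂ b₁ b₂ α : ℝ} (ha₁ : 0 ≤ a₁) (hb₁ : 0 ≤ b₁)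
    (ha₂ : 0 < a₂) (hab : a₂ ≤ b₂) (hb₂ : b₂ ≤ 17 / 16 * a₂) (hctrl : a₁ - b₁ ≤ b₂ - a₂)
    (hα₀ : 0 ≤ α) (hα₁ : α ≤ 1) :
    b₂ * ((a₁ ^ 2 + a₂ ^ 2) ^ α - (b₁ ^ 2 + b₂ ^ 2) ^ α) ≤
      3 / 2 * (a₁ ^ 2 + a₂ ^ 2) ^ α * (b₂ - a₂) := by
  have hRb : 0 < b₁ ^ 2 + b₂ ^ 2 := by nlinarith
  have hX : 0 ≤ (a₁ ^ 2 + a₂ ^ 2) ^ α := by positivity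
  rcases le_or_gt (a₁ ^ 2 + a₂ ^ 2) (b₁ ^ 2 + b₂ ^ 2) with hR | hR
  · have := Real.rpow_le_rpow (by positivity) hR hα₀
    nlinarith [mul_nonneg hX (sub_nonneg.2 hab)]
  have hY := Real.rpow_nonneg hRb.le α
  have hXY := Real.rpow_le_rpow hRb.le hR.le hα₀
  have htangent := mul_rpow_sub_rpow_le (by positivity) hRb hα₀ hα₁ (x := a₁ ^ 2 + a₂ ^ 2)
  have hdiff : a₁ ^ 2 + a₂ ^ 2 - (b₁ ^ 2 + b₂ ^ 2) ≤ (b₂ - a₂) * (a₁ + b₁) := by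
    nlinarith [mul_le_mul_of_nonneg_right hctrl (add_nonneg ha₁ hb₁)]
  have hcross : b₂ * (a₁ + b₁) ≤ 18 / 17 * (b₁ ^ 2 + b₂ ^ 2) := by
    nlinarith [sq_nonneg (b₁ - b₂)]
  set X := (a₁ ^ 2 + a₂ ^ 2) ^ α
  set Y := (b₁ ^ 2 + b₂ ^ 2) ^ α
  have : (b₁ ^ 2 + b₂ ^ 2) * (b₂ * (X - Y)) ≤ (b₁ ^ 2 + b₂ ^ 2) * (3 / 2 * X * (b₂ - a₂)) := by
    calc (b₁ ^ 2 + b₂ ^ 2) * (b₂ * (X - Y))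
        ≤ b₂ * (α * Y * (b₂ - a₂) * (a₁ + b₁)) := by
          have hb₂Y : 0 ≤ b₂ * (α * Y) := mul_nonneg (by linarith) (mul_nonneg hα₀ hY)
          linarith [mul_le_mul_of_nonneg_left hdiff hb₂Y,
            mul_le_mul_of_nonneg_left htangent (by linarith : 0 ≤ b₂)]
      _ ≤ α * X * (b₂ - a₂) * (18 / 17 * (b₁ ^ 2 + b₂ ^ 2)) := by
          have := mul_le_mul hXY hcross (by nlinarith) hX
          nlinarith [mul_le_mul_of_nonneg_left this (mul_nonneg hα₀ (sub_nonneg.2 hab))]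
      _ ≤ (b₁ ^ 2 + b₂ ^ 2) * (3 / 2 * X * (b₂ - a₂)) := by
          nlinarith [mul_nonneg (mul_nonneg hX (sub_nonneg.2 hab)) hRb.le]
  exact le_of_mul_le_mul_left this hRb

theorem antitoneOn_Icc_of_hasDerivAt_nonpos {f f' : ℝ → ℝ} {a b : ℝ}
    (hf : ∀ x ∈ Icc a b, HasDerivAt f (f' x) x) (hf' : ∀ x ∈ Icc a b, f' x ≤ 0) :
    AntitoneOn f (Icc a b) :=
  antitoneOn_of_hasDerivWithinAt_nonpos (convex_Icc a b)
    (fun x hx => (hf x hx).continuousAt.continuousWithinAt)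
    (fun x hx => (hf x (interior_subset hx)).hasDerivWithinAt)
    fun x hx => hf' x (interior_subset hx)

theorem monotoneOn_Icc_of_hasDerivAt_nonneg {f f' : ℝ → ℝ} {a b : ℝ}
    (hf : ∀ x ∈ Icc a b, HasDerivAt f (f' x) x) (hf' : ∀ x ∈ Icc a b, 0 ≤ f' x) :
    MonotoneOn f (Icc a b) :=
  monotoneOn_of_hasDerivWithinAt_nonneg (convex_Icc a b)
    (fun x hx => (hf x hx).continuousAt.continuousWithinAt)
    (fun x hx => (hf x (interior_subset hx)).hasDerivWithinAt)
    fun x hx => hf' x (interior_subset hx)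

theorem antitoneOn_mul_of_hasDerivAt_le {f f' w w' k : ℝ → ℝ} {a b : ℝ}
    (hf : ∀ x ∈ Icc a b, HasDerivAt f (f' x) x) (hw : ∀ x ∈ Icc a b, HasDerivAt w (w' x) x)
    (hf₀ : ∀ x ∈ Icc a b, 0 ≤ f x) (hw₀ : ∀ x ∈ Icc a b, 0 ≤ w x)
    (hf' : ∀ x ∈ Icc a b, f' x ≤ -(k x * f x)) (hw' : ∀ x ∈ Icc a b, w' x ≤ k x * w x) :
    AntitoneOn (fun x => f x * w x) (Icc a b) :=
  antitoneOn_Icc_of_hasDerivAt_nonpos (fun x hx => (hf x hx).mul (hw x hx)) fun x hx => by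
    nlinarith [mul_le_mul_of_nonneg_right (hf' x hx) (hw₀ x hx),
      mul_le_mul_of_nonneg_left (hw' x hx) (hf₀ x hx)]

def SolvesSlowdown (L α : ℝ) (s₁ s₂ : ℝ → ℝ) (I : Set ℝ) : Prop :=
  ∀ t ∈ I, HasDerivAt s₁ (L * s₁ t * (s₁ t ^ 2 + s₂ t ^ 2) ^ α) t ∧
    HasDerivAt s₂ (-(L * s₂ t * (s₁ t ^ 2 + s₂ t ^ 2) ^ α)) t

namespace SolvesSlowdown

variable {L α : ℝ} {s₁ s₂ u₁ u₂ : ℝ → ℝ} {I : Set ℝ} {a b c t : ℝ}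

theorem mono {J : Set ℝ} (hs : SolvesSlowdown L α s₁ s₂ I) (hJ : J ⊆ I) :
    SolvesSlowdown L α s₁ s₂ J :=
  fun t ht => hs t (hJ ht)

theorem fst_mul_snd_eq (hs : SolvesSlowdown L α s₁ s₂ (Icc a b)) :
    ∀ x ∈ Icc a b, s₁ x * s₂ x = s₁ a * s₂ a :=
  constant_of_has_deriv_right_zero
    (fun x hx => ((hs x hx).1.mul (hs x hx).2).continuousAt.continuousWithinAt) fun x hx => by
      have h := (hs x (Ico_subset_Icc_self hx)).1.fun_mul (hs x (Ico_subset_Icc_self hx)).2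
      convert h.hasDerivWithinAt using 1
      ring

theorem hasDerivAt_snd_div (hs : SolvesSlowdown L α s₁ s₂ I) (hu : SolvesSlowdown L α u₁ u₂ I)
    (ht : t ∈ I) (h₀ : s₂ t ≠ 0) :
    HasDerivAt (fun x => u₂ x / s₂ x) (L * (u₂ t / s₂ t) *
      ((s₁ t ^ 2 + s₂ t ^ 2) ^ α - (u₁ t ^ 2 + u₂ t ^ 2) ^ α)) t := by
  refine ((hu t ht).2.fun_div (hs t ht).2 h₀).congr_deriv ?_
  field_simp
  ring

theorem hasDerivAt_sub_snd_div_fst (hs : SolvesSlowdown L α s₁ s₂ I)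
    (hu : SolvesSlowdown L α u₁ u₂ I) (ht : t ∈ I) (h₀ : s₁ t ≠ 0) :
    HasDerivAt (fun x => (u₂ x - s₂ x) / s₁ x) (-(L / s₁ t) *
      (2 * (u₂ t - s₂ t) * (s₁ t ^ 2 + s₂ t ^ 2) ^ α +
        u₂ t * ((u₁ t ^ 2 + u₂ t ^ 2) ^ α - (s₁ t ^ 2 + s₂ t ^ 2) ^ α))) t := by
  refine (((hu t ht).2.fun_sub (hs t ht).2).fun_div (hs t ht).1 h₀).congr_deriv ?_
  field_simp
  ring

theorem antitoneOn_snd_div (hs : SolvesSlowdown L α s₁ s₂ (Icc a c))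
    (hu : SolvesSlowdown L α u₁ u₂ (Icc a c)) (hL : 0 ≤ L) (hα : 0 ≤ α)
    (hpos : ∀ x ∈ Icc a c, 0 < s₁ x ∧ 0 < s₂ x ∧ 0 < u₁ x ∧ 0 < u₂ x)
    (horder : ∀ x ∈ Icc a c, s₁ x ≤ s₂ x)
    (hctrl : ∀ x ∈ Icc a c, |u₁ x - s₁ x| ≤ u₂ x - s₂ x) :
    AntitoneOn (fun x => u₂ x / s₂ x) (Icc a c) :=
  antitoneOn_Icc_of_hasDerivAt_nonpos (fun x hx => hs.hasDerivAt_snd_div hu hx (hpos x hx).2.1.ne')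
    fun x hx => by
      obtain ⟨hs₁, hs₂, -, hu₂⟩ := hpos x hx
      have hR := sq_add_sq_le_sq_add_sq hs₁.le (horder x hx) (hctrl x hx)
      have := Real.rpow_le_rpow (by positivity) hR hα
      exact mul_nonpos_of_nonneg_of_nonpos (by positivity) (by linarith)

theorem sub_snd_le_of_sub_snd_div_le {ε : ℝ} (hs : SolvesSlowdown L α s₁ s₂ (Icc a c))
    (hu : SolvesSlowdown L α u₁ u₂ (Icc a c)) (hL : 0 ≤ L) (hα : 0 ≤ α)
    (hpos : ∀ x ∈ Icc a c, 0 < s₁ x ∧ 0 < s₂ x ∧ 0 < u₁ x ∧ 0 < u₂ x)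
    (horder : ∀ x ∈ Icc a c, s₁ x ≤ s₂ x)
    (hctrl : ∀ x ∈ Icc a c, |u₁ x - s₁ x| ≤ u₂ x - s₂ x) (hac : a ≤ c)
    (hinit : (u₂ a - s₂ a) / s₂ a ≤ ε) :
    u₂ c - s₂ c ≤ ε * s₂ c := by
  have hratio := hs.antitoneOn_snd_div hu hL hα hpos horder hctrl (left_mem_Icc.2 hac)
    (right_mem_Icc.2 hac) hac
  rw [sub_div, div_self (hpos a (left_mem_Icc.2 hac)).2.1.ne'] at hinit
  have : u₂ c / s₂ c ≤ 1 + ε := hratio.trans (by linarith)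
  rw [div_le_iff₀ (hpos c (right_mem_Icc.2 hac)).2.1] at this
  linarith

theorem snd_le_of_mul_le {μ : ℝ} (hs : SolvesSlowdown L α s₁ s₂ (Icc a c))
    (hu : SolvesSlowdown L α u₁ u₂ (Icc a c)) (hL : 0 < L) (hα : 0 < α) (hμ₀ : 0 ≤ μ) (hμ₁ : μ < 1)
    (hpos : ∀ x ∈ Icc a c, 0 < s₁ x ∧ 0 < s₂ x ∧ 0 < u₁ x ∧ 0 < u₂ x)
    (hctrl : ∀ x ∈ Icc a c, s₁ x - u₁ x ≤ μ * (u₂ x - s₂ x))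
    (hprod : u₁ a * u₂ a ≤ (1 + (1 - μ ^ 2) / 60) * (s₁ a * s₂ a))
    (hinit : u₂ a ≤ 17 / 16 * s₂ a) :
    ∀ x ∈ Icc a c, u₂ x ≤ 17 / 16 * s₂ x := by
  intro x hx
  have ha : a ∈ Icc a c := ⟨le_rfl, hx.1.trans hx.2⟩
  have hderiv := fun x (hx : x ∈ Icc a c) => hs.hasDerivAt_snd_div hu hx (hpos x hx).2.1.ne'
  have hratio := image_le_of_deriv_right_lt_deriv_boundary
    (fun x hx => (hderiv x hx).continuousAt.continuousWithinAt)
    (fun x hx => (hderiv x (Ico_subset_Icc_self hx)).hasDerivWithinAt)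
    (B := fun _ => 17 / 16) ((div_le_iff₀ (hpos a ha).2.1).2 hinit)
    (fun _ => hasDerivAt_const _ _) ?_ hx
  · rwa [div_le_iff₀ (hpos x hx).2.1] at hratio
  intro y hy hy_eq
  have hy := Ico_subset_Icc_self hy
  obtain ⟨hs₁, hs₂, hu₁, hu₂⟩ := hpos y hy
  obtain ⟨hs₁a, hs₂a, hu₁a, hu₂a⟩ := hpos a ha
  set ρ := u₁ a * u₂ a / (s₁ a * s₂ a)
  have hρ : ρ ≤ 1 + (1 - μ ^ 2) / 60 := (div_le_iff₀ (by positivity)).2 hprod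
  have hprod_y : u₁ y * u₂ y = ρ * (s₁ y * s₂ y) := by
    rw [hu.fst_mul_snd_eq y hy, hs.fst_mul_snd_eq y hy]
    exact (div_mul_cancel₀ _ (by positivity)).symm
  have hR := sq_add_sq_lt_of_mul_eq hs₁ hs₂ hμ₀ hμ₁ (by positivity) hρ
    (by rw [← hy_eq]; field_simp) hprod_y (hctrl y hy)
  have := Real.rpow_lt_rpow (by positivity) hR hα
  exact mul_neg_of_pos_of_neg (by positivity) (by linarith)

theorem snd_le_of_fst_eq_snd {μ : ℝ} (hs : SolvesSlowdown L α s₁ s₂ (Icc a c))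
    (hu : SolvesSlowdown L α u₁ u₂ (Icc a c)) (hL : 0 < L) (hα : 0 < α) (hμ₀ : 0 ≤ μ) (hμ₁ : μ < 1)
    (hpos : ∀ x ∈ Icc a c, 0 < s₁ x ∧ 0 < s₂ x ∧ 0 < u₁ x ∧ 0 < u₂ x)
    (hctrl : ∀ x ∈ Icc a c, |u₁ x - s₁ x| ≤ μ * (u₂ x - s₂ x)) (hbalance : s₁ a = s₂ a)
    (hgap : 0 ≤ u₂ a - s₂ a) (hnear : u₂ a - s₂ a ≤ (1 - μ) / 72 * s₂ a) :
    ∀ x ∈ Icc a c, u₂ x ≤ 17 / 16 * s₂ x := by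
  intro x hx
  have ha : a ∈ Icc a c := ⟨le_rfl, hx.1.trans hx.2⟩
  have hprod : u₁ a * u₂ a ≤ (1 + (1 - μ ^ 2) / 60) * (s₁ a * s₂ a) := by
    rw [hbalance]
    exact mul_le_of_sub_le_of_sub_le (hpos a ha).2.1 hμ₀ hμ₁.le hgap hnear
      (by linarith [(abs_le.1 (hctrl a ha)).2])
  refine hs.snd_le_of_mul_le hu hL hα hμ₀ hμ₁ hpos
    (fun y hy => by linarith [(abs_le.1 (hctrl y hy)).1]) hprod ?_ x hx
  nlinarith [(hpos a ha).2.1]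

theorem monotoneOn_rpow_neg_add (hs : SolvesSlowdown L α s₁ s₂ (Icc a b)) (hL : 0 ≤ L)
    (hα : 0 ≤ α) (horder : ∀ x ∈ Icc a b, 0 < s₂ x ∧ s₂ x ≤ s₁ x) :
    MonotoneOn (fun x => s₁ x ^ (-(2 * α)) + 2 ^ α * (2 * α * L) * x) (Icc a b) := by
  have hs₁ : ∀ x ∈ Icc a b, 0 < s₁ x := fun x hx => (horder x hx).1.trans_le (horder x hx).2
  refine monotoneOn_Icc_of_hasDerivAt_nonneg (fun x hx =>
    ((hs x hx).1.rpow_const (Or.inl (hs₁ x hx).ne')).add ((hasDerivAt_id x).const_mul _))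
    fun x hx => ?_
  have hs₁x := hs₁ x hx
  have hR : (s₁ x ^ 2 + s₂ x ^ 2) ^ α ≤ 2 ^ α * s₁ x ^ (2 * α) := calc
    _ ≤ (2 * s₁ x ^ 2) ^ α :=
      Real.rpow_le_rpow (by positivity) (by nlinarith [horder x hx]) hα
    _ = 2 ^ α * s₁ x ^ (2 * α) := by
      rw [Real.mul_rpow zero_le_two (sq_nonneg _), ← Real.rpow_natCast_mul hs₁x.le]
      norm_num
  have hpow : s₁ x * s₁ x ^ (-(2 * α) - 1) * s₁ x ^ (2 * α) = 1 := by
    rw [mul_assoc, ← Real.rpow_add hs₁x, show -(2 * α) - 1 + 2 * α = -1 by ring,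
      Real.rpow_neg_one, mul_inv_cancel₀ hs₁x.ne']
  have hRP : (s₁ x ^ 2 + s₂ x ^ 2) ^ α * (s₁ x * s₁ x ^ (-(2 * α) - 1)) ≤ 2 ^ α := calc
    _ ≤ 2 ^ α * s₁ x ^ (2 * α) * (s₁ x * s₁ x ^ (-(2 * α) - 1)) :=
      mul_le_mul_of_nonneg_right hR (by positivity)
    _ = 2 ^ α := by linear_combination 2 ^ α * hpow
  nlinarith [mul_le_mul_of_nonneg_left hRP (by positivity : 0 ≤ 2 * α * L)]

theorem rpow_le_mul_one_add (hs : SolvesSlowdown L α s₁ s₂ (Icc a b)) (hL : 0 ≤ L)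
    (hα : 0 ≤ α) (horder : ∀ x ∈ Icc a b, 0 < s₂ x ∧ s₂ x ≤ s₁ x) {x : ℝ} (hx : x ∈ Icc a b) :
    s₁ b ^ (2 * α) ≤ s₁ x ^ (2 * α) * (1 + 2 ^ α * (2 * α * L) * s₁ b ^ (2 * α) * (b - x)) := by
  have hb : b ∈ Icc a b := ⟨hx.1.trans hx.2, le_rfl⟩
  have hG := hs.monotoneOn_rpow_neg_add hL hα horder hx hb hx.2
  have hs₁x := (horder x hx).1.trans_le (horder x hx).2
  have hs₁b := (horder b hb).1.trans_le (horder b hb).2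
  have hp := Real.rpow_pos_of_pos hs₁x (2 * α)
  have hq := Real.rpow_pos_of_pos hs₁b (2 * α)
  simp only [Real.rpow_neg hs₁x.le, Real.rpow_neg hs₁b.le] at hG
  field_simp at hG
  nlinarith

theorem antitoneOn_sub_snd_div_fst_mul_rpow {β : ℝ} (hs : SolvesSlowdown L α s₁ s₂ (Icc a b))
    (hu : SolvesSlowdown L α u₁ u₂ (Icc a b)) (hL : 0 ≤ L) (hα₀ : 0 ≤ α) (hα₁ : α ≤ 1)
    (hβ : 2 ^ (α + 2) * α * β ≤ 1)
    (hpos : ∀ x ∈ Icc a b, 0 < s₁ x ∧ 0 < s₂ x ∧ 0 < u₁ x ∧ 0 < u₂ x)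
    (horder : ∀ x ∈ Icc a b, s₂ x ≤ s₁ x) (hgap : ∀ x ∈ Icc a b, s₂ x ≤ u₂ x)
    (hclose : ∀ x ∈ Icc a b, u₂ x ≤ 17 / 16 * s₂ x)
    (hctrl : ∀ x ∈ Icc a b, |u₁ x - s₁ x| ≤ u₂ x - s₂ x) :
    AntitoneOn (fun x => (u₂ x - s₂ x) / s₁ x *
      (1 + 2 ^ α * (2 * α * L) * s₁ b ^ (2 * α) * (b - x)) ^ (-β)) (Icc a b) := by
  set A := 2 ^ α * (2 * α * L) * s₁ b ^ (2 * α) with hA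
  have hN : ∀ x ∈ Icc a b, 0 < 1 + A * (b - x) := fun x hx => by
    have := (hpos b ⟨hx.1.trans hx.2, le_rfl⟩).1
    have := sub_nonneg.2 hx.2
    positivity
  have hw : ∀ x ∈ Icc a b, HasDerivAt (fun x => (1 + A * (b - x)) ^ (-β))
      (β * A / (1 + A * (b - x)) * (1 + A * (b - x)) ^ (-β)) x := fun x hx => by
    have hN' : HasDerivAt (fun x => 1 + A * (b - x)) (-A) x := by
      simpa using (((hasDerivAt_id x).const_sub b).const_mul A).const_add 1
    refine (hN'.rpow_const (Or.inl (hN x hx).ne')).congr_deriv ?_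
    rw [Real.rpow_sub_one (hN x hx).ne']
    ring
  -- The weight grows at the relative rate `βA / (1 + A (b - x))`, and `(u₂ - s₂) / s₁` decays
  -- at least at the rate `(L/2) |s|^{2α}`, which dominates it by `hrate`.
  refine antitoneOn_mul_of_hasDerivAt_le (k := fun x => β * A / (1 + A * (b - x)))
    (fun x hx => hs.hasDerivAt_sub_snd_div_fst hu hx (hpos x hx).1.ne') hw
    (fun x hx => div_nonneg (sub_nonneg.2 (hgap x hx)) (hpos x hx).1.le)
    (fun x hx => (Real.rpow_pos_of_pos (hN x hx) _).le) (fun x hx => ?_) fun _ _ => le_rfl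
  obtain ⟨hs₁, hs₂, hu₁, hu₂⟩ := hpos x hx
  have hrate : β * A ≤ L / 2 * (s₁ x ^ 2 + s₂ x ^ 2) ^ α * (1 + A * (b - x)) := by
    have hβ' : 2 ^ α * (2 * α) * β ≤ 1 / 2 := by
      rw [Real.rpow_add two_pos, Real.rpow_two] at hβ
      linarith
    have hs₁b := hs.rpow_le_mul_one_add hL hα₀ (fun y hy => ⟨(hpos y hy).2.1, horder y hy⟩) hx
    have hs₁x : s₁ x ^ (2 * α) ≤ (s₁ x ^ 2 + s₂ x ^ 2) ^ α := by
      rw [Real.rpow_mul hs₁.le, Real.rpow_two]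
      exact Real.rpow_le_rpow (sq_nonneg _) (le_add_of_nonneg_right (sq_nonneg _)) hα₀
    have hq := Real.rpow_nonneg (hpos b ⟨hx.1.trans hx.2, le_rfl⟩).1.le (2 * α)
    calc β * A = (2 ^ α * (2 * α) * β) * (L * s₁ b ^ (2 * α)) := by rw [hA]; ring
      _ ≤ 1 / 2 * (L * (s₁ x ^ (2 * α) * (1 + A * (b - x)))) := by gcongr
      _ ≤ L / 2 * (s₁ x ^ 2 + s₂ x ^ 2) ^ α * (1 + A * (b - x)) := by
        have := hN x hx
        nlinarith [mul_le_mul_of_nonneg_right hs₁x this.le]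
  have hk : β * A / (1 + A * (b - x)) ≤ L / 2 * (s₁ x ^ 2 + s₂ x ^ 2) ^ α :=
    (div_le_iff₀ (hN x hx)).2 hrate
  have hgain : (u₂ x - s₂ x) * (s₁ x ^ 2 + s₂ x ^ 2) ^ α / 2 ≤
      2 * (u₂ x - s₂ x) * (s₁ x ^ 2 + s₂ x ^ 2) ^ α +
        u₂ x * ((u₁ x ^ 2 + u₂ x ^ 2) ^ α - (s₁ x ^ 2 + s₂ x ^ 2) ^ α) := by
    linarith [snd_mul_rpow_sub_rpow_le hs₁.le hu₁.le hs₂ (hgap x hx) (hclose x hx)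
      (by linarith [(abs_le.1 (hctrl x hx)).1]) hα₀ hα₁]
  calc _ ≤ -(L / s₁ x * ((u₂ x - s₂ x) * (s₁ x ^ 2 + s₂ x ^ 2) ^ α / 2)) := by
        rw [neg_mul, neg_le_neg_iff]
        exact mul_le_mul_of_nonneg_left hgain (by positivity)
    _ = -(L / 2 * (s₁ x ^ 2 + s₂ x ^ 2) ^ α * ((u₂ x - s₂ x) / s₁ x)) := by ring
    _ ≤ _ := neg_le_neg (mul_le_mul_of_nonneg_right hk
        (div_nonneg (sub_nonneg.2 (hgap x hx)) hs₁.le))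

theorem sub_snd_le {β : ℝ} (hs : SolvesSlowdown L α s₁ s₂ (Icc a b))
    (hu : SolvesSlowdown L α u₁ u₂ (Icc a b)) (hL : 0 ≤ L) (hα₀ : 0 ≤ α) (hα₁ : α ≤ 1)
    (hβ : 2 ^ (α + 2) * α * β ≤ 1)
    (hpos : ∀ x ∈ Icc a b, 0 < s₁ x ∧ 0 < s₂ x ∧ 0 < u₁ x ∧ 0 < u₂ x)
    (horder : ∀ x ∈ Icc a b, s₂ x ≤ s₁ x) (hgap : ∀ x ∈ Icc a b, s₂ x ≤ u₂ x)
    (hclose : ∀ x ∈ Icc a b, u₂ x ≤ 17 / 16 * s₂ x)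
    (hctrl : ∀ x ∈ Icc a b, |u₁ x - s₁ x| ≤ u₂ x - s₂ x) {t : ℝ} (ht : t ∈ Icc a b) :
    u₂ t - s₂ t ≤ (u₂ a - s₂ a) / s₁ a * s₁ t *
      ((1 + 2 ^ α * (2 * α * L) * s₁ b ^ (2 * α) * (b - t)) /
        (1 + 2 ^ α * (2 * α * L) * s₁ b ^ (2 * α) * (b - a))) ^ β := by
  have ha : a ∈ Icc a b := ⟨le_rfl, ht.1.trans ht.2⟩
  have hH := hs.antitoneOn_sub_snd_div_fst_mul_rpow hu hL hα₀ hα₁ hβ hpos horder hgap hclose hctrl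
    ha ht ht.1
  set A := 2 ^ α * (2 * α * L) * s₁ b ^ (2 * α)
  have hA : 0 ≤ A := by
    have := (hpos b ⟨ht.1.trans ht.2, le_rfl⟩).1
    positivity
  have hNt : 0 < 1 + A * (b - t) := by nlinarith [ht.2]
  have hNa : 0 < 1 + A * (b - a) := by nlinarith [ht.1, ht.2]
  have hs₁t := (hpos t ht).1
  calc u₂ t - s₂ t
      = (u₂ t - s₂ t) / s₁ t * (1 + A * (b - t)) ^ (-β) * (s₁ t * (1 + A * (b - t)) ^ β) := by
        rw [Real.rpow_neg hNt.le]
        field_simp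
    _ ≤ (u₂ a - s₂ a) / s₁ a * (1 + A * (b - a)) ^ (-β) * (s₁ t * (1 + A * (b - t)) ^ β) :=
        mul_le_mul_of_nonneg_right hH (by positivity)
    _ = _ := by
        rw [Real.rpow_neg hNa.le, Real.div_rpow hNt.le hNa.le]
        field_simp

end SolvesSlowdown

theorem spread_in_slowdown_second_general
    (lam α : ℝ) (hlam : 1 < lam) (hα : α ∈ Set.Ioo (0 : ℝ) 1)
    (p : ℤ) (hp : 3 ≤ p)
    (L C₀ : ℝ)
    (hL : L = Real.log lam * ((p : ℝ) / 2) ^ (2 * α))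
    (hC₀ : C₀ = 2 * α * L)
    (T μ : ℝ) (hμ : μ ∈ Set.Ioo (0 : ℝ) 1)
    (s₁ s₂ u₁ u₂ : ℝ → ℝ)
    (hs₁ : ∀ t ∈ Set.Icc (0 : ℝ) T,
      HasDerivAt s₁ (L * s₁ t * (s₁ t ^ 2 + s₂ t ^ 2) ^ α) t)
    (hs₂ : ∀ t ∈ Set.Icc (0 : ℝ) T,
      HasDerivAt s₂ (-(L * s₂ t * (s₁ t ^ 2 + s₂ t ^ 2) ^ α)) t)
    (hu₁ : ∀ t ∈ Set.Icc (0 : ℝ) T,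
      HasDerivAt u₁ (L * u₁ t * (u₁ t ^ 2 + u₂ t ^ 2) ^ α) t)
    (hu₂ : ∀ t ∈ Set.Icc (0 : ℝ) T,
      HasDerivAt u₂ (-(L * u₂ t * (u₁ t ^ 2 + u₂ t ^ 2) ^ α)) t)
    (hpos : ∀ t ∈ Set.Icc (0 : ℝ) T,
      0 < s₁ t ∧ 0 < s₂ t ∧ 0 < u₁ t ∧ 0 < u₂ t)
    (horder₁ : ∀ t ∈ Set.Icc (0 : ℝ) (T / 2), s₁ t ≤ s₂ t)
    (horder₂ : ∀ t ∈ Set.Icc (T / 2) T, s₂ t ≤ s₁ t)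
    (hΔpos : ∀ t ∈ Set.Icc (0 : ℝ) T, 0 < u₂ t - s₂ t)
    (hΔctrl : ∀ t ∈ Set.Icc (0 : ℝ) T, |u₁ t - s₁ t| ≤ μ * (u₂ t - s₂ t))
    (hinit : (u₂ 0 - s₂ 0) / s₂ 0 ≤ (1 - μ) / 72)
    (t b : ℝ) (ht₁ : T / 2 ≤ t) (htb : t ≤ b) (hbT : b ≤ T) :
    u₂ t - s₂ t ≤ ((u₂ (T / 2) - s₂ (T / 2)) / s₁ (T / 2)) * s₁ t *
      ((1 + 2 ^ α * C₀ * s₁ b ^ (2 * α) * (b - t)) /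
        (1 + 2 ^ α * C₀ * s₁ b ^ (2 * α) * (b - T / 2))) ^ ((1 - μ) / 2 ^ (α + 2)) := by
  obtain ⟨hα₀, hα₁⟩ := hα
  obtain ⟨hμ₀, hμ₁⟩ := hμ
  have hp' : (3 : ℝ) ≤ p := by exact_mod_cast hp
  have hL₀ : 0 < L := hL ▸ mul_pos (Real.log_pos hlam) (Real.rpow_pos_of_pos (by linarith) _)
  subst hC₀
  have hT₁ : 0 ≤ T / 2 := by linarith
  have hfirst : Icc 0 (T / 2) ⊆ Icc 0 T := Icc_subset_Icc_right (by linarith)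
  have hsecond : Icc (T / 2) T ⊆ Icc 0 T := Icc_subset_Icc_left hT₁
  have hspread : Icc (T / 2) b ⊆ Icc (T / 2) T := Icc_subset_Icc_right hbT
  have hs : SolvesSlowdown L α s₁ s₂ (Icc 0 T) := fun x hx => ⟨hs₁ x hx, hs₂ x hx⟩
  have hu : SolvesSlowdown L α u₁ u₂ (Icc 0 T) := fun x hx => ⟨hu₁ x hx, hu₂ x hx⟩
  have hctrl : ∀ x ∈ Icc 0 T, |u₁ x - s₁ x| ≤ u₂ x - s₂ x := fun x hx =>
    (hΔctrl x hx).trans (mul_le_of_le_one_left (hΔpos x hx).le hμ₁.le)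
  have hnear := (hs.mono hfirst).sub_snd_le_of_sub_snd_div_le (hu.mono hfirst) hL₀.le hα₀.le
    (fun x hx => hpos x (hfirst hx)) horder₁ (fun x hx => hctrl x (hfirst hx)) hT₁ hinit
  have hclose := (hs.mono hsecond).snd_le_of_fst_eq_snd (hu.mono hsecond) hL₀ hα₀ hμ₀.le hμ₁
    (fun x hx => hpos x (hsecond hx)) (fun x hx => hΔctrl x (hsecond hx))
    ((horder₁ _ (right_mem_Icc.2 hT₁)).antisymm (horder₂ _ (left_mem_Icc.2 (by linarith))))
    (hΔpos _ (hfirst (right_mem_Icc.2 hT₁))).le hnear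
  have hβ : 2 ^ (α + 2) * α * ((1 - μ) / 2 ^ (α + 2)) ≤ 1 := by
    rw [mul_right_comm, mul_div_cancel₀ _ (by positivity)]
    nlinarith
  have hsub := hspread.trans hsecond
  exact (hs.mono hsub).sub_snd_le (hu.mono hsub) hL₀.le hα₀.le hα₁.le hβ
    (fun x hx => hpos x (hsub hx)) (fun x hx => horder₂ x (hspread hx))
    (fun x hx => (sub_pos.1 (hΔpos x (hsub hx))).le) (fun x hx => hclose x (hspread hx))
    (fun x hx => hctrl x (hsub hx)) ⟨ht₁, htb⟩

/-- Lemma "spread-in-slowdown", second estimate: under the standing comparison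
assumptions for two solutions `s = (s₁,s₂)` and `s̃ = (u₁,u₂)` of the slow-down
system on `[0,T]` with `T₁ = T/2` and `β = (1-μ)/2^{α+2}`, for `T₁ ≤ t ≤ b ≤ T`,
`Δs₂(t) ≤ (Δs₂(T₁)/s₁(T₁)) s₁(t)
  ((1 + 2^α C₀ s₁(b)^{2α} (b-t)) / (1 + 2^α C₀ s₁(b)^{2α} (b-T₁)))^β`. -/
theorem spread_in_slowdown_second
    (lam α : ℝ) (hlam : 1 < lam) (hα : α ∈ Set.Ioo (0 : ℝ) 1)
    (p : ℤ) (hp : 3 ≤ p)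
    (L C₀ : ℝ)
    (hL : L = Real.log lam * ((p : ℝ) / 2) ^ (2 * α))
    (hC₀ : C₀ = 2 * α * L)
    (T μ : ℝ) (hT : 0 < T) (hμ : μ ∈ Set.Ioo (0 : ℝ) 1)
    (s₁ s₂ u₁ u₂ : ℝ → ℝ)
    (hs₁ : ∀ t ∈ Set.Icc (0 : ℝ) T,
      HasDerivAt s₁ (L * s₁ t * (s₁ t ^ 2 + s₂ t ^ 2) ^ α) t)
    (hs₂ : ∀ t ∈ Set.Icc (0 : ℝ) T,
      HasDerivAt s₂ (-(L * s₂ t * (s₁ t ^ 2 + s₂ t ^ 2) ^ α)) t)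
    (hu₁ : ∀ t ∈ Set.Icc (0 : ℝ) T,
      HasDerivAt u₁ (L * u₁ t * (u₁ t ^ 2 + u₂ t ^ 2) ^ α) t)
    (hu₂ : ∀ t ∈ Set.Icc (0 : ℝ) T,
      HasDerivAt u₂ (-(L * u₂ t * (u₁ t ^ 2 + u₂ t ^ 2) ^ α)) t)
    (hpos : ∀ t ∈ Set.Icc (0 : ℝ) T,
      0 < s₁ t ∧ 0 < s₂ t ∧ 0 < u₁ t ∧ 0 < u₂ t)
    (horder₁ : ∀ t ∈ Set.Icc (0 : ℝ) (T / 2), s₁ t ≤ s₂ t)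
    (horder₂ : ∀ t ∈ Set.Icc (T / 2) T, s₂ t ≤ s₁ t)
    (hΔpos : ∀ t ∈ Set.Icc (0 : ℝ) T, 0 < u₂ t - s₂ t)
    (hΔctrl : ∀ t ∈ Set.Icc (0 : ℝ) T, |u₁ t - s₁ t| ≤ μ * (u₂ t - s₂ t))
    (hinit : (u₂ 0 - s₂ 0) / s₂ 0 ≤ (1 - μ) / 72)
    (t b : ℝ) (ht₁ : T / 2 ≤ t) (htb : t ≤ b) (hbT : b ≤ T) :
    u₂ t - s₂ t ≤ ((u₂ (T / 2) - s₂ (T / 2)) / s₁ (T / 2)) * s₁ t *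
      ((1 + 2 ^ α * C₀ * s₁ b ^ (2 * α) * (b - t)) /
        (1 + 2 ^ α * C₀ * s₁ b ^ (2 * α) * (b - T / 2))) ^ ((1 - μ) / 2 ^ (α + 2)) :=
  spread_in_slowdown_second_general lam α hlam hα p hp L C₀ hL hC₀ T μ hμ s₁ s₂ u₁ u₂ hs₁ hs₂ hu₁
    hu₂ hpos horder₁ horder₂ hΔpos hΔctrl hinit t b ht₁ htb hbT
end

section
/- Fix a real α ∈ (0,1) and an integer p ≥ 3, and define H : ℂ → ℝ by H(0) = 0 and H(z) = |z|^{2/(1−α) − p} · Im(z^p) for z ≠ 0. Then for every natural number k with k < 2/(1−α) there exists a constant B > 0 such that for all z ∈ ℂ with 0 < |z| ≤ 1, the k-th total derivative of H at z satisfies ‖D^k H(z)‖ ≤ B·|z|^{2/(1−α) − k}. -/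
/-!
`H` is positively homogeneous of degree `γ = 2/(1-α)`: `H (c • z) = c ^ γ * H z` for `c > 0`.
Differentiating `k` times, `D^k H (c • z) = c ^ (γ - k) • D^k H z`, so `D^k H z` is determined by
its values on the unit circle, where `H` is smooth and hence `D^k H` is bounded by compactness.
-/

open Set Metric

section Homogeneous

variable {E F : Type*} [NormedAddCommGroup E] [NormedSpace ℝ E]
  [NormedAddCommGroup F] [NormedSpace ℝ F]

def IsPosHomogeneous (γ : ℝ) (f : E → F) : Prop :=
  ∀ c : ℝ, 0 < c → ∀ x, f (c • x) = c ^ γ • f x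

theorem iteratedFDeriv_const_smul_of_ne_zero (f : E → F) {c : ℝ} (hc : c ≠ 0) (k : ℕ) (x : E) :
    iteratedFDeriv ℝ k (c • f) x = c • iteratedFDeriv ℝ k f x :=
  (ContinuousLinearEquiv.smulLeft (R₁ := ℝ) (M₁ := F) (Units.mk0 c hc)).iteratedFDeriv_comp_left

theorem iteratedFDeriv_comp_const_smul_of_ne_zero (f : E → F) {c : ℝ} (hc : c ≠ 0) (k : ℕ)
    (x : E) :
    iteratedFDeriv ℝ k (fun y => f (c • y)) x = c ^ k • iteratedFDeriv ℝ k f (c • x) := by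
  let g : E ≃L[ℝ] E := ContinuousLinearEquiv.smulLeft (Units.mk0 c hc)
  have h := g.iteratedFDerivWithin_comp_right f uniqueDiffOn_univ (mem_univ (g x)) k
  simp only [preimage_univ, iteratedFDerivWithin_univ] at h
  ext m
  change iteratedFDeriv ℝ k (f ∘ g) x m = _
  rw [h]
  change iteratedFDeriv ℝ k f (c • x) (fun i => c • m i) = _
  simp [ContinuousMultilinearMap.map_smul_univ]

theorem IsPosHomogeneous.iteratedFDeriv_smul {γ : ℝ} {f : E → F} (hf : IsPosHomogeneous γ f)
    (k : ℕ) {c : ℝ} (hc : 0 < c) (x : E) :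
    iteratedFDeriv ℝ k f (c • x) = c ^ (γ - k) • iteratedFDeriv ℝ k f x := by
  have hcomp : (fun y => f (c • y)) = c ^ γ • f := funext fun y => hf c hc y
  have key := iteratedFDeriv_comp_const_smul_of_ne_zero f hc.ne' k x
  rw [hcomp, iteratedFDeriv_const_smul_of_ne_zero f (Real.rpow_pos_of_pos hc γ).ne'] at key
  rw [Real.rpow_sub hc, Real.rpow_natCast, div_eq_inv_mul, mul_smul, key, inv_smul_smul₀
    (pow_pos hc k).ne']

theorem IsPosHomogeneous.exists_norm_iteratedFDeriv_le [ProperSpace E] {γ : ℝ} {f : E → F}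
    (hf : IsPosHomogeneous γ f) (k : ℕ)
    (hcont : ContinuousOn (iteratedFDeriv ℝ k f) (sphere 0 1)) :
    ∃ B > 0, ∀ x : E, x ≠ 0 → ‖iteratedFDeriv ℝ k f x‖ ≤ B * ‖x‖ ^ (γ - k) := by
  obtain ⟨C, hC⟩ := (isCompact_sphere (0 : E) 1).exists_bound_of_continuousOn hcont
  refine ⟨max C 1, by positivity, fun x hx => ?_⟩
  have hr : 0 < ‖x‖ := norm_pos_iff.mpr hx
  have hu : ‖x‖⁻¹ • x ∈ sphere (0 : E) 1 := by
    rw [mem_sphere_zero_iff_norm, norm_smul, norm_inv, norm_norm, inv_mul_cancel₀ hr.ne']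
  calc ‖iteratedFDeriv ℝ k f x‖
      = ‖iteratedFDeriv ℝ k f (‖x‖ • ‖x‖⁻¹ • x)‖ := by rw [smul_inv_smul₀ hr.ne']
    _ = ‖x‖ ^ (γ - k) * ‖iteratedFDeriv ℝ k f (‖x‖⁻¹ • x)‖ := by
      rw [hf.iteratedFDeriv_smul k hr, norm_smul, Real.norm_of_nonneg (by positivity)]
    _ ≤ ‖x‖ ^ (γ - k) * max C 1 := by gcongr; exact (hC _ hu).trans (le_max_left _ _)
    _ = max C 1 * ‖x‖ ^ (γ - k) := mul_comm _ _

end Homogeneous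

theorem isPosHomogeneous_norm_rpow_mul_im_zpow (γ : ℝ) (p : ℤ) :
    IsPosHomogeneous γ (fun z : ℂ => ‖z‖ ^ (γ - p) * (z ^ p).im) := by
  intro c hc z
  have hpow : ((c • z) ^ p).im = c ^ p * (z ^ p).im := by
    rw [Complex.real_smul, mul_zpow, ← Complex.ofReal_zpow, Complex.im_ofReal_mul]
  simp only
  rw [hpow, norm_smul, Real.norm_of_nonneg hc.le, Real.mul_rpow hc.le (norm_nonneg z),
    smul_eq_mul, ← Real.rpow_intCast, Real.rpow_sub hc]
  field_simp [(Real.rpow_pos_of_pos hc (p : ℝ)).ne']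

theorem contDiffAt_norm_rpow_mul_im_zpow {n : WithTop ℕ∞} (γ : ℝ) (p : ℤ) {z : ℂ} (hz : z ≠ 0) :
    ContDiffAt ℝ n (fun z : ℂ => ‖z‖ ^ (γ - p) * (z ^ p).im) z := by
  have hnorm : ContDiffAt ℝ n (fun w : ℂ => ‖w‖ ^ (γ - p)) z :=
    (Real.contDiffAt_rpow_const_of_ne (norm_ne_zero_iff.mpr hz)).comp z (contDiffAt_norm ℝ hz)
  have hzpow : ContDiffAt ℝ n (fun w : ℂ => w ^ p) z :=
    ((analyticAt_id (𝕜 := ℂ)).zpow hz).contDiffAt.restrict_scalars ℝ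
  exact hnorm.mul (Complex.imCLM.contDiff.contDiffAt.comp z hzpow)

theorem im_zero_zpow (p : ℤ) : ((0 : ℂ) ^ p).im = 0 := by
  rw [zero_zpow_eq]; split_ifs <;> simp

theorem hamiltonian_derivative_bound_general
    (α : ℝ)
    (p : ℤ)
    (H : ℂ → ℝ)
    (hH0 : H 0 = 0)
    (hH : ∀ z : ℂ, z ≠ 0 →
      H z = ‖z‖ ^ (2 / (1 - α) - (p : ℝ)) * (z ^ p).im)
    (k : ℕ) :
    ∃ B > (0 : ℝ), ∀ z : ℂ, 0 < ‖z‖ → ‖z‖ ≤ 1 →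
      ‖iteratedFDeriv ℝ k H z‖ ≤ B * ‖z‖ ^ (2 / (1 - α) - (k : ℝ)) := by
  have hH_eq : H = fun z : ℂ => ‖z‖ ^ (2 / (1 - α) - p) * (z ^ p).im := by
    funext z
    rcases eq_or_ne z 0 with rfl | hz
    · rw [hH0, im_zero_zpow, mul_zero]
    · exact hH z hz
  subst hH_eq
  obtain ⟨B, hB, hbound⟩ :=
    (isPosHomogeneous_norm_rpow_mul_im_zpow (2 / (1 - α)) p).exists_norm_iteratedFDeriv_le k
      fun z hz => ((contDiffAt_norm_rpow_mul_im_zpow _ p (ne_of_mem_sphere hz one_ne_zero)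
        ).continuousAt_iteratedFDeriv le_rfl).continuousWithinAt
  exact ⟨B, hB, fun z hz _ => hbound z (norm_pos_iff.mp hz)⟩

/-- Derivative bounds for the slowed-down Hamiltonian: for `α ∈ (0,1)`,
`p ≥ 3`, and `H(z) = |z|^{2/(1-α) - p} Im(z^p)` (with `H(0) = 0`),
for every natural `k < 2/(1-α)` there is `B > 0` such that
`‖D^k H(z)‖ ≤ B |z|^{2/(1-α) - k}` for `0 < |z| ≤ 1`. -/
theorem hamiltonian_derivative_bound
    (α : ℝ) (hα : α ∈ Set.Ioo (0 : ℝ) 1)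
    (p : ℤ) (hp : 3 ≤ p)
    (H : ℂ → ℝ)
    (hH0 : H 0 = 0)
    (hH : ∀ z : ℂ, z ≠ 0 →
      H z = ‖z‖ ^ (2 / (1 - α) - (p : ℝ)) * (z ^ p).im)
    (k : ℕ) (hk : (k : ℝ) < 2 / (1 - α)) :
    ∃ B > (0 : ℝ), ∀ z : ℂ, 0 < ‖z‖ → ‖z‖ ≤ 1 →
      ‖iteratedFDeriv ℝ k H z‖ ≤ B * ‖z‖ ^ (2 / (1 - α) - (k : ℝ)) :=
  hamiltonian_derivative_bound_general α p H hH0 hH k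
end
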